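/- For k ≥ 3 and n ≥ 1, the set W = Y(1,1) ∪ (⋃_{i=2}^{k-1} Y(2,i)) has exactly k^{n-1} + 1 elements. -/
import Mathlib


/-- Two vertices of the Hamming graph `H(n,k)` are adjacent iff they differ
in exactly one coordinate. -/
def HAdj {n k : ℕ} (v w : Fin n → ZMod k) : Prop := ∃! i, v i ≠ w i

/-- `X n k s` is the set of vertices whose coordinate sum is `s` in `ZMod k`. -/
def X (n k : ℕ) (s : ZMod k) : Set (Fin n → ZMod k) := {v | ∑ i, v i = s}

/-- `ellN v` is the (0-based) largest index at which `v` is nonzero (0 if `v = 0`). -/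
def ellN {n k : ℕ} (v : Fin n → ZMod k) : ℕ :=
  (Finset.univ.filter (fun i => v i ≠ 0)).sup (fun i : Fin n => (i : ℕ))

/-- `Y n k s t` is the set of nonzero vertices with coordinate sum `s`
whose last nonzero coordinate equals `t`. -/
def Y (n k : ℕ) (s t : ZMod k) : Set (Fin n → ZMod k) :=
  {v | v ≠ 0 ∧ ∑ i, v i = s ∧ ∃ i : Fin n, (i : ℕ) = ellN v ∧ v i = t}

section aux
variable {n k : ℕ}

lemma ellN_exists (v : Fin n → ZMod k) (hv : v ≠ 0) :
    ∃ j : Fin n, (j : ℕ) = ellN v ∧ v j ≠ 0 := by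
  have hne : (Finset.univ.filter (fun i => v i ≠ 0)).Nonempty := by
    rcases Function.ne_iff.mp hv with ⟨i, hi⟩
    exact ⟨i, Finset.mem_filter.mpr ⟨Finset.mem_univ i, hi⟩⟩
  obtain ⟨j, hj, hje⟩ := Finset.exists_mem_eq_sup _ hne (fun i : Fin n => (i : ℕ))
  exact ⟨j, hje.symm, (Finset.mem_filter.mp hj).2⟩

lemma le_ellN {v : Fin n → ZMod k} {i : Fin n} (h : v i ≠ 0) : (i : ℕ) ≤ ellN v :=
  Finset.le_sup (by simp [h])

lemma ellN_zero_eq {v : Fin n → ZMod k} (h : ellN v = 0) {i : Fin n}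
    (hi : (i : ℕ) ≠ 0) : v i = 0 := by
  by_contra hvi
  have := le_ellN hvi
  omega

lemma ellN_le_congr {v w : Fin n → ZMod k} {j : Fin n}
    (h : ∀ i : Fin n, (i : ℕ) ≠ 0 → v i = w i)
    (hj : w j ≠ 0) (hj0 : (j : ℕ) ≠ 0) : ellN v ≤ ellN w := by
  apply Finset.sup_le
  intro i hi
  simp only [Finset.mem_filter, Finset.mem_univ, true_and] at hi
  by_cases h0 : (i : ℕ) = 0
  · exact h0 ▸ Nat.zero_le _
  · exact le_ellN (h i h0 ▸ hi)

lemma ellN_congr {v w : Fin n → ZMod k} {j : Fin n}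
    (h : ∀ i : Fin n, (i : ℕ) ≠ 0 → v i = w i)
    (hj : v j ≠ 0) (hj0 : (j : ℕ) ≠ 0) : ellN v = ellN w := by
  have hwj : w j ≠ 0 := h j hj0 ▸ hj
  exact le_antisymm (ellN_le_congr h hwj hj0)
    (ellN_le_congr (fun i hi => (h i hi).symm) hj hj0)

lemma Y_last_val {s t : ZMod k} {v : Fin n → ZMod k} (hv : v ∈ Y n k s t) {j : Fin n}
    (hj : (j : ℕ) = ellN v) : v j = t := by
  obtain ⟨_, _, i, hi, hit⟩ := hv
  have : i = j := Fin.ext (by omega)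
  rwa [← this]

lemma cast_inj_of_lt (hk : 0 < k) {a b : ℕ} (ha : a < k) (hb : b < k)
    (h : (a : ZMod k) = b) : a = b := by
  haveI : NeZero k := ⟨hk.ne'⟩
  have := congrArg ZMod.val h
  rwa [ZMod.val_cast_of_lt ha, ZMod.val_cast_of_lt hb] at this

end aux


lemma zmod_ne {k a b : ℕ} (hk : 0 < k) (ha : a < k) (hb : b < k) (hab : a ≠ b) :
    (a : ZMod k) ≠ (b : ZMod k) :=
  fun h => hab (cast_inj_of_lt hk ha hb h)

lemma one_ne_two_zmod {k : ℕ} (hk : 3 ≤ k) : (1 : ZMod k) ≠ 2 := by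
  have := zmod_ne (k := k) (a := 1) (b := 2) (by omega) (by omega) (by omega) (by omega)
  simpa using this

lemma two_ne_zero_zmod {k : ℕ} (hk : 3 ≤ k) : (2 : ZMod k) ≠ 0 := by
  have := zmod_ne (k := k) (a := 2) (b := 0) (by omega) (by omega) (by omega) (by omega)
  simpa using this

lemma card_X (m k : ℕ) [NeZero k] (s : ZMod k) : (X (m + 1) k s).ncard = k ^ m := by
  have e : X (m + 1) k s ≃ (Fin m → ZMod k) :=
  { toFun := fun v => fun i => v.1 i.castSucc
    invFun := fun w => ⟨Fin.snoc w (s - ∑ i, w i), by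
      simp [X, Fin.sum_univ_castSucc]⟩
    left_inv := by
      rintro ⟨v, hv⟩
      ext i
      refine Fin.lastCases ?_ (fun i => ?_) i
      · have hs : ∑ i, v i = s := hv
        rw [Fin.sum_univ_castSucc] at hs
        simp only [Fin.snoc_last]
        rw [sub_eq_iff_eq_add]
        rw [← hs]; ring
      · simp
    right_inv := fun w => by ext i; simp }
  rw [← Nat.card_coe_set_eq, Nat.card_congr e]
  simp [Nat.card_eq_fintype_card, ZMod.card]

lemma union_eq (n k : ℕ) (hk : 3 ≤ k) :
    (⋃ i ∈ Finset.Icc 2 (k - 1), Y n k 2 (i : ZMod k)) = X n k 2 \ Y n k 2 1 := by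
  haveI : NeZero k := ⟨by omega⟩
  ext v
  simp only [Set.mem_iUnion, Set.mem_diff, exists_prop, Finset.mem_Icc]
  constructor
  · rintro ⟨i, ⟨hi2, hik⟩, hv⟩
    refine ⟨hv.2.1, ?_⟩
    intro hv1
    obtain ⟨j, hj, _⟩ := hv.2.2
    have h1 : v j = (i : ZMod k) := Y_last_val hv hj
    have h2 : v j = 1 := Y_last_val hv1 hj
    have h3 : (i : ZMod k) = ((1 : ℕ) : ZMod k) := by rw [← h1, h2]; simp
    have := cast_inj_of_lt (by omega) (by omega) (by omega) h3
    omega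
  · rintro ⟨hv2, hv1⟩
    have hsum : ∑ i, v i = 2 := hv2
    have hvne : v ≠ 0 := by
      intro h
      apply two_ne_zero_zmod hk
      rw [← hsum, h]; simp
    obtain ⟨j, hj, hjne⟩ := ellN_exists v hvne
    set t := v j with ht
    have htne1 : t ≠ 1 := fun h1 => hv1 ⟨hvne, hv2, j, hj, h1⟩
    have htval : ((t.val : ℕ) : ZMod k) = t := ZMod.natCast_rightInverse t
    refine ⟨t.val, ⟨?_, ?_⟩, ⟨hvne, hv2, j, hj, by rw [htval]⟩⟩
    · have h0 : t.val ≠ 0 := fun h => hjne ((ZMod.val_eq_zero t).mp h)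
      have h1 : t.val ≠ 1 := fun h => htne1 (by rw [← htval, h, Nat.cast_one])
      omega
    · have := ZMod.val_lt t; omega

lemma Y_card (n k : ℕ) (hn : 1 ≤ n) (hk : 3 ≤ k) :
    (Y n k 1 1).ncard = (Y n k 2 1).ncard + 1 := by
  haveI : NeZero k := ⟨by omega⟩
  haveI : NeZero n := ⟨by omega⟩
  haveI : Fact (1 < k) := ⟨by omega⟩
  set e : Fin n → ZMod k := Pi.single (0 : Fin n) 1 with he
  have he0 : e 0 = 1 := Pi.single_eq_same 0 1
  have heother : ∀ i : Fin n, (i : ℕ) ≠ 0 → e i = 0 := by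
    intro i hi
    apply Pi.single_eq_of_ne
    intro h; apply hi; rw [h]; simp
  have hene : e ≠ 0 := fun h => one_ne_zero (by rw [← he0, h]; simp)
  have hesum : ∑ i, e i = 1 := by simp [he, Finset.sum_pi_single']
  have heell : ellN e = 0 := by
    apply Nat.le_zero.mp
    apply Finset.sup_le
    intro i hi
    simp only [Finset.mem_filter, Finset.mem_univ, true_and] at hi
    by_contra h
    exact hi (heother i (by omega))
  have heY : e ∈ Y n k 1 1 := ⟨hene, hesum, 0, by simp [heell], he0⟩
  -- helper: a vector with ellN 0 and head value 1 is e
  have hsingle : ∀ v : Fin n → ZMod k, ellN v = 0 → v 0 = 1 → v = e := by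
    intro v h0 h1
    funext i
    by_cases hi : (i : ℕ) = 0
    · have : i = 0 := Fin.ext (by simpa using hi)
      rw [this, h1, he0]
    · rw [ellN_zero_eq h0 hi, heother i hi]
  have himg : (fun v => v - e) '' (Y n k 2 1) = Y n k 1 1 \ {e} := by
    ext w
    constructor
    · rintro ⟨v, ⟨hvne, hvsum, j, hj, hj1⟩, rfl⟩
      show (v - e) ∈ Y n k 1 1 \ {e}
      have hvj : v j ≠ 0 := by rw [hj1]; exact one_ne_zero
      have hjne0 : (j : ℕ) ≠ 0 := by
        intro h0
        have hell0 : ellN v = 0 := by omega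
        have hv0 : v 0 = 1 := by
          have : (0 : Fin n) = j := Fin.ext (by simp [h0])
          rw [this, hj1]
        have := hsingle v hell0 hv0
        apply one_ne_two_zmod hk
        rw [← hesum, ← this, hvsum]
      have hagree : ∀ i : Fin n, (i : ℕ) ≠ 0 → v i = (v - e) i := by
        intro i hi; simp [heother i hi]
      have hellvw : ellN v = ellN (v - e) := ellN_congr hagree hvj hjne0
      have hwj : (v - e) j = 1 := by rw [← hagree j hjne0, hj1]
      refine ⟨⟨?_, ?_, j, by omega, hwj⟩, ?_⟩
      · intro h
        exact one_ne_zero (by rw [← hwj, h]; simp)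
      · have : ∑ i, (v - e) i = ∑ i, v i - ∑ i, e i := by
          simp [Finset.sum_sub_distrib]
        rw [this, hvsum, hesum]; norm_num
      · intro hmem
        have hve : v - e = e := hmem
        have := congrFun hve j
        simp [heother j hjne0] at this
        exact hvj this
    · rintro ⟨⟨hwne, hwsum, j, hj, hj1⟩, hwe⟩
      have hwj : w j ≠ 0 := by rw [hj1]; exact one_ne_zero
      have hjne0 : (j : ℕ) ≠ 0 := by
        intro h0
        apply hwe
        have hell0 : ellN w = 0 := by omega
        have hw0 : w 0 = 1 := by
          have : (0 : Fin n) = j := Fin.ext (by simp [h0])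
          rw [this, hj1]
        exact hsingle w hell0 hw0
      have hagree : ∀ i : Fin n, (i : ℕ) ≠ 0 → (w + e) i = w i := by
        intro i hi; simp [heother i hi]
      have hwej : (w + e) j = 1 := by rw [hagree j hjne0, hj1]
      have hellvw : ellN (w + e) = ellN w :=
        ellN_congr hagree (by rw [hwej]; exact one_ne_zero) hjne0
      refine ⟨w + e, ⟨?_, ?_, j, by omega, hwej⟩, by funext i; simp⟩
      · intro h
        exact one_ne_zero (by rw [← hwej, h]; simp)
      · have : ∑ i, (w + e) i = ∑ i, w i + ∑ i, e i := by
          simp [Finset.sum_add_distrib]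
        rw [this, hwsum, hesum]; norm_num
  have hinj : Function.Injective (fun v : Fin n → ZMod k => v - e) :=
    sub_left_injective
  have h1 : (Y n k 2 1).ncard = (Y n k 1 1 \ {e}).ncard := by
    rw [← himg, Set.ncard_image_of_injective _ hinj]
  rw [h1, Set.ncard_diff_singleton_add_one heY (Set.toFinite _)]

theorem stmt8 (n k : ℕ) (hn : 1 ≤ n) (hk : 3 ≤ k) :
    (Y n k 1 1 ∪ ⋃ i ∈ Finset.Icc 2 (k - 1), Y n k 2 (i : ZMod k)).ncard
      = k ^ (n - 1) + 1 := by
  haveI : NeZero k := ⟨by omega⟩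
  obtain ⟨m, rfl⟩ : ∃ m, n = m + 1 := ⟨n - 1, by omega⟩
  rw [union_eq _ _ hk]
  have hY21X : Y (m + 1) k 2 1 ⊆ X (m + 1) k 2 := fun v hv => hv.2.1
  have hdisj : Disjoint (Y (m + 1) k 1 1) (X (m + 1) k 2 \ Y (m + 1) k 2 1) := by
    rw [Set.disjoint_left]
    rintro v hv ⟨hv2, _⟩
    apply one_ne_two_zmod hk
    rw [← hv.2.1]; exact hv2
  rw [Set.ncard_union_eq hdisj (Set.toFinite _) (Set.toFinite _)]
  rw [Set.ncard_diff hY21X]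
  rw [Y_card _ _ (by omega) hk, card_X]
  have hle : (Y (m + 1) k 2 1).ncard ≤ (X (m + 1) k 2).ncard :=
    Set.ncard_le_ncard hY21X (Set.toFinite _)
  rw [card_X] at hle
  simp only [Nat.add_sub_cancel]
  omega
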